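/- arXiv:2203.13644 — 3 statements merged into one kernel-verified Lean document; each statement's English description precedes it below -/
import Mathlib

section
/- Let p be a rational prime with p > n ≥ 2, and a ∈ ℕ. Suppose integers x_1,…,x_n, y_1,…,y_n satisfy x_1^j + ⋯ + x_n^j ≡ y_1^j + ⋯ + y_n^j (mod p^{na}) for all 1 ≤ j ≤ n. Then there exists a permutation σ of {1,…,n} such that x_j ≡ y_{σ(j)} (mod p^a) for all 1 ≤ j ≤ n. -/
open Polynomial in
theorem content_linear (A B : ℤ) : (C A * X + C B).content = ↑(Int.gcd A B) := by
  rw [Polynomial.content_eq_gcd_range_of_lt _ 2]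
  · simp only [Finset.range_add_one, Finset.range_one, Finset.gcd_insert, Finset.gcd_singleton,
      coeff_add, coeff_C, coeff_C_mul, coeff_X]
    norm_num
    simp only [Int.gcd, ← Int.abs_eq_normalize, ← Int.coe_gcd]
    simp [Int.gcd, Int.natAbs_abs]
  · have h1 : (C A * X + C B).natDegree ≤ 1 := by
      apply Polynomial.natDegree_add_le_of_degree_le
      · exact (Polynomial.natDegree_C_mul_le _ _).trans (by simp)
      · simp
    omega


theorem gcd_step {p : ℕ} (hp : p.Prime) {c : ℕ} (hc : 1 ≤ c) (M : ℕ) :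
    Nat.gcd (p^c) M = Nat.gcd (p^(c-1)) M * (if p^c ∣ M then p else 1) := by
  by_cases hd : p^c ∣ M
  · rw [if_pos hd, Nat.gcd_eq_left hd, Nat.gcd_eq_left ((pow_dvd_pow p (by omega)).trans hd),
      ← pow_succ]
    congr 1; omega
  · rw [if_neg hd, mul_one]
    apply Nat.dvd_antisymm
    · obtain ⟨k, hk, hg⟩ := (Nat.dvd_prime_pow hp).1 (Nat.gcd_dvd_left (p^c) M)
      have hklt : k ≤ c - 1 := by
        rcases Nat.lt_or_ge k c with h | h
        · omega
        · exfalso; apply hd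
          calc p^c ∣ p^k := pow_dvd_pow p (by omega)
            _ = Nat.gcd (p^c) M := hg.symm
            _ ∣ M := Nat.gcd_dvd_right _ _
      exact Nat.dvd_gcd (hg ▸ pow_dvd_pow p hklt) (Nat.gcd_dvd_right _ _)
    · exact Nat.dvd_gcd ((Nat.gcd_dvd_left _ _).trans (pow_dvd_pow p (by omega)))
        (Nat.gcd_dvd_right _ _)


open Polynomial in
theorem content_finset_prod {α : Type*} (s : Finset α) (f : α → Polynomial ℤ) :
    (∏ i ∈ s, f i).content = ∏ i ∈ s, (f i).content := by
  classical
  induction s using Finset.induction_on with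
  | empty => simp
  | insert _ _ h ih => rw [Finset.prod_insert h, Finset.prod_insert h, Polynomial.content_mul, ih]

theorem exists_perm_of_fiber_card_eq {α β : Type*} [Fintype α] [DecidableEq β]
    (f g : α → β)
    (h : ∀ b : β, Fintype.card {i // f i = b} = Fintype.card {i // g i = b}) :
    ∃ σ : Equiv.Perm α, ∀ i, f i = g (σ i) := by
  classical
  have e : ∀ b : β, {i // f i = b} ≃ {i // g i = b} := fun b => Fintype.equivOfCardEq (h b)
  let σ : Equiv.Perm α :=
    (Equiv.sigmaFiberEquiv f).symm.trans ((Equiv.sigmaCongrRight e).trans (Equiv.sigmaFiberEquiv g))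
  refine ⟨σ, fun i => ?_⟩
  show f i = g ((Equiv.sigmaFiberEquiv g) ((Equiv.sigmaCongrRight e) ((Equiv.sigmaFiberEquiv f).symm i)))
  have h1 : (Equiv.sigmaFiberEquiv f).symm i = ⟨f i, ⟨i, rfl⟩⟩ := rfl
  rw [h1]
  have h2 : (Equiv.sigmaCongrRight e) ⟨f i, ⟨i, rfl⟩⟩ = ⟨f i, e (f i) ⟨i, rfl⟩⟩ := rfl
  rw [h2]
  exact ((e (f i) ⟨i, rfl⟩).2).symm


open MvPolynomial in
theorem esymm_eq_of_psum_eq {n : ℕ} {R : Type} [CommRing R] (x y : Fin n → R)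
    (hinv : ∀ k : ℕ, 1 ≤ k → k ≤ n → IsUnit (k : R))
    (hpsum : ∀ j : ℕ, 1 ≤ j → j ≤ n → ∑ i, x i ^ j = ∑ i, y i ^ j) :
    ∀ k ≤ n, aeval x (esymm (Fin n) R k) = aeval y (esymm (Fin n) R k) := by
  intro k hk
  induction k using Nat.strong_induction_on with
  | _ k ih =>
  rcases Nat.eq_zero_or_pos k with rfl | hk1
  · simp [esymm]
  have hN := congrArg (aeval x) (mul_esymm_eq_sum (Fin n) R k)
  have hN' := congrArg (aeval y) (mul_esymm_eq_sum (Fin n) R k)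
  have haeval_psum : ∀ (z : Fin n → R) (j : ℕ), aeval z (psum (Fin n) R j) = ∑ i, z i ^ j := by
    intro z j; simp [psum]
  simp only [map_mul, map_natCast, map_sum, map_pow, map_neg, map_one, map_ofNat] at hN hN'
  have hsum_eq : ∑ a ∈ Finset.HasAntidiagonal.antidiagonal k with a.1 < k,
        (-1 : R) ^ a.1 * aeval x (esymm (Fin n) R a.1) * aeval x (psum (Fin n) R a.2)
      = ∑ a ∈ Finset.HasAntidiagonal.antidiagonal k with a.1 < k,
        (-1 : R) ^ a.1 * aeval y (esymm (Fin n) R a.1) * aeval y (psum (Fin n) R a.2) := by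
    apply Finset.sum_congr rfl
    intro a ha
    simp only [Finset.mem_filter, Finset.HasAntidiagonal.mem_antidiagonal] at ha
    obtain ⟨hsum, hlt⟩ := ha
    rw [haeval_psum, haeval_psum, ih a.1 hlt (by omega), hpsum a.2 (by omega) (by omega)]
  have : (k : R) * aeval x (esymm (Fin n) R k) = (k : R) * aeval y (esymm (Fin n) R k) := by
    rw [hN, hN', hsum_eq]
  exact (hinv k hk1 hk).mul_left_cancel this


open Polynomial in
theorem prod_X_sub_C_eq {n : ℕ} {R : Type} [CommRing R] (x y : Fin n → R)
    (hE : ∀ k ≤ n, MvPolynomial.aeval x (MvPolynomial.esymm (Fin n) R k)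
      = MvPolynomial.aeval y (MvPolynomial.esymm (Fin n) R k)) :
    ∏ i, (X - C (x i)) = ∏ i, (X - C (y i)) := by
  have key : ∀ z : Fin n → R, ∀ k ≤ n, (∏ i, (X - C (z i))).coeff k
      = (-1) ^ (n - k) * MvPolynomial.aeval z (MvPolynomial.esymm (Fin n) R (n - k)) := by
    intro z k hk
    have h1 : ∀ i : Fin n, X - C (z i) = X + C (-(z i)) := by intro i; ring_nf; rw [map_neg]; ring
    simp_rw [h1]
    rw [Finset.prod_X_add_C_coeff _ _ (by simpa using hk)]
    rw [MvPolynomial.aeval_esymm_eq_multiset_esymm, Finset.esymm_map_val]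
    rw [Finset.mul_sum]
    simp only [Finset.card_univ, Fintype.card_fin]
    apply Finset.sum_congr rfl
    intro t ht
    rw [Finset.mem_powersetCard] at ht
    rw [← ht.2]
    calc ∏ i ∈ t, -z i = ∏ i ∈ t, (-1 : R) * z i := by
          apply Finset.prod_congr rfl; intros; ring
      _ = (∏ _i ∈ t, (-1 : R)) * t.prod z := Finset.prod_mul_distrib
      _ = (-1) ^ t.card * t.prod z := by rw [Finset.prod_const]
  apply Polynomial.ext
  intro k
  rcases le_or_gt k n with hk | hk
  · rw [key x k hk, key y k hk, hE (n - k) (by omega)]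
  · have hdeg : ∀ z : Fin n → R, (∏ i, (X - C (z i))).natDegree ≤ n := by
      intro z
      refine (Polynomial.natDegree_prod_le _ _).trans ?_
      refine le_trans (Finset.sum_le_card_nsmul _ _ 1 ?_) (by simp)
      intro i _
      exact Polynomial.natDegree_X_sub_C_le _
    rw [Polynomial.coeff_eq_zero_of_natDegree_lt (lt_of_le_of_lt (hdeg x) hk),
      Polynomial.coeff_eq_zero_of_natDegree_lt (lt_of_le_of_lt (hdeg y) hk)]

open Polynomial in
theorem gcd_prod_eq {n : ℕ} (p : ℕ) (hp : p.Prime) (c : ℕ) (x y : Fin n → ℤ) (r : ℤ)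
    (hcong : Polynomial.C ((p : ℤ) ^ (n * c)) ∣
      (∏ i, (X - C (x i))) - ∏ i, (X - C (y i))) :
    ∏ i, Int.gcd ((p : ℤ) ^ c) (r - x i) = ∏ i, Int.gcd ((p : ℤ) ^ c) (r - y i) := by
  set L : Polynomial ℤ := C ((p : ℤ) ^ c) * X + C r with hL
  have hcomp : ∀ z : Fin n → ℤ, (∏ i, (X - C (z i))).comp L
      = ∏ i, (C ((p : ℤ) ^ c) * X + C (r - z i)) := by
    intro z
    rw [Polynomial.prod_comp]
    apply Finset.prod_congr rfl
    intro i _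
    rw [Polynomial.sub_comp, Polynomial.X_comp, Polynomial.C_comp, hL, map_sub]
    ring
  set Pc := ∏ i, (C ((p : ℤ) ^ c) * X + C (r - x i)) with hPc
  set Qc := ∏ i, (C ((p : ℤ) ^ c) * X + C (r - y i)) with hQc
  have hcontP : Pc.content = ∏ i, (Int.gcd ((p : ℤ) ^ c) (r - x i) : ℤ) := by
    rw [hPc, content_finset_prod]
    exact Finset.prod_congr rfl fun i _ => content_linear _ _
  have hcontQ : Qc.content = ∏ i, (Int.gcd ((p : ℤ) ^ c) (r - y i) : ℤ) := by
    rw [hQc, content_finset_prod]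
    exact Finset.prod_congr rfl fun i _ => content_linear _ _
  have hdvdpow : ∀ z : Fin n → ℤ,
      (∏ i, (Int.gcd ((p : ℤ) ^ c) (r - z i) : ℤ)) ∣ (p : ℤ) ^ (n * c) := by
    intro z
    have : (∏ i, (Int.gcd ((p : ℤ) ^ c) (r - z i) : ℤ)) ∣ ∏ _i : Fin n, (p : ℤ) ^ c :=
      Finset.prod_dvd_prod_of_dvd _ _ fun i _ => Int.gcd_dvd_left _ _
    simpa [Finset.prod_const, ← pow_mul, mul_comm c n] using this
  have hdvdPQ : Polynomial.C ((p : ℤ) ^ (n * c)) ∣ Pc - Qc := by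
    obtain ⟨H, hH⟩ := hcong
    refine ⟨H.comp L, ?_⟩
    calc Pc - Qc = ((∏ i, (X - C (x i))) - ∏ i, (X - C (y i))).comp L := by
          rw [Polynomial.sub_comp, hcomp x, hcomp y]
      _ = C ((p : ℤ) ^ (n * c)) * H.comp L := by
          rw [hH, Polynomial.mul_comp, Polynomial.C_comp]
  have key : Pc.content = Qc.content := by
    have h1 : Qc.content ∣ Pc.content := by
      rw [Polynomial.dvd_content_iff_C_dvd]
      have : Pc = Qc + (Pc - Qc) := by ring
      rw [this]
      exact dvd_add Qc.C_content_dvd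
        (dvd_trans (map_dvd Polynomial.C (hcontQ ▸ hdvdpow y)) hdvdPQ)
    have h2 : Pc.content ∣ Qc.content := by
      rw [Polynomial.dvd_content_iff_C_dvd]
      have : Qc = Pc + (Qc - Pc) := by ring
      rw [this]
      have hdvdQP : Polynomial.C ((p : ℤ) ^ (n * c)) ∣ Qc - Pc := by
        have := dvd_neg.mpr hdvdPQ
        rwa [neg_sub] at this
      exact dvd_add Pc.C_content_dvd
        (dvd_trans (map_dvd Polynomial.C (hcontP ▸ hdvdpow x)) hdvdQP)
    exact Int.dvd_antisymm (hcontP ▸ Finset.prod_nonneg fun i _ => Int.natCast_nonneg _)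
      (hcontQ ▸ Finset.prod_nonneg fun i _ => Int.natCast_nonneg _) h2 h1
  have : (↑(∏ i, Int.gcd ((p : ℤ) ^ c) (r - x i)) : ℤ)
      = ↑(∏ i, Int.gcd ((p : ℤ) ^ c) (r - y i)) := by
    push_cast
    rw [← hcontP, ← hcontQ, key]
  exact_mod_cast this

theorem int_gcd_pow (p c : ℕ) (m : ℤ) : Int.gcd ((p : ℤ) ^ c) m = Nat.gcd (p ^ c) m.natAbs := by
  simp [Int.gcd, Int.natAbs_pow]

theorem dvd_natAbs_iff (p c : ℕ) (m : ℤ) : p ^ c ∣ m.natAbs ↔ (p : ℤ) ^ c ∣ m := by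
  rw [← Int.natAbs_dvd_natAbs]
  simp [Int.natAbs_pow]

theorem prod_gcd_step {n : ℕ} (p : ℕ) (hp : p.Prime) {a : ℕ} (ha : 1 ≤ a) (r : ℤ)
    (z : Fin n → ℤ) [DecidablePred fun i : Fin n => (p : ℤ) ^ a ∣ (r - z i)] :
    ∏ i, Int.gcd ((p : ℤ) ^ a) (r - z i)
      = (∏ i, Int.gcd ((p : ℤ) ^ (a - 1)) (r - z i))
        * p ^ ({i | (p : ℤ) ^ a ∣ (r - z i)} : Finset (Fin n)).card := by
  have hfac : ∀ i : Fin n, Int.gcd ((p : ℤ) ^ a) (r - z i)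
      = Int.gcd ((p : ℤ) ^ (a - 1)) (r - z i) * (if (p : ℤ) ^ a ∣ (r - z i) then p else 1) := by
    intro i
    rw [int_gcd_pow, int_gcd_pow, gcd_step hp ha]
    exact congrArg _ (if_congr (dvd_natAbs_iff p a _) rfl rfl)
  calc ∏ i, Int.gcd ((p : ℤ) ^ a) (r - z i)
      = ∏ i, (Int.gcd ((p : ℤ) ^ (a - 1)) (r - z i))
          * (if (p : ℤ) ^ a ∣ (r - z i) then p else 1) := Finset.prod_congr rfl fun i _ => hfac i
    _ = (∏ i, Int.gcd ((p : ℤ) ^ (a - 1)) (r - z i))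
          * ∏ i, (if (p : ℤ) ^ a ∣ (r - z i) then p else 1) := Finset.prod_mul_distrib
    _ = _ := by
          congr 1
          rw [Finset.prod_ite, Finset.prod_const, Finset.prod_const_one, mul_one]

theorem stmt_0 (n a : ℕ) (p : ℕ) (hp : p.Prime) (hn : 2 ≤ n) (hpn : n < p)
    (x y : Fin n → ℤ)
    (h : ∀ j : ℕ, 1 ≤ j → j ≤ n →
      (∑ i, x i ^ j) ≡ (∑ i, y i ^ j) [ZMOD ((p : ℤ) ^ (n * a))]) :
    ∃ σ : Equiv.Perm (Fin n), ∀ i, x i ≡ y (σ i) [ZMOD ((p : ℤ) ^ a)] := by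
  classical
  rcases Nat.eq_zero_or_pos a with rfl | ha
  · exact ⟨1, fun i => by rw [pow_zero]; exact Int.modEq_one⟩
  haveI : NeZero (p ^ a) := ⟨pow_ne_zero _ hp.pos.ne'⟩
  set M := p ^ (n * a) with hM
  have hMcast : ((M : ℕ) : ℤ) = (p : ℤ) ^ (n * a) := by rw [hM]; push_cast; ring
  have hpacast : ((p ^ a : ℕ) : ℤ) = (p : ℤ) ^ a := by push_cast; ring
  -- Units
  have hinv : ∀ k : ℕ, 1 ≤ k → k ≤ n → IsUnit ((k : ℕ) : ZMod M) := by
    intro k hk1 hk2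
    rw [ZMod.isUnit_iff_coprime]
    apply Nat.Coprime.pow_right
    rw [Nat.coprime_comm]
    exact hp.coprime_iff_not_dvd.mpr fun hdvd => by
      have := Nat.le_of_dvd (by omega) hdvd; omega
  -- Power sums over ZMod M
  have hpsum : ∀ j : ℕ, 1 ≤ j → j ≤ n →
      ∑ i, ((x i : ℤ) : ZMod M) ^ j = ∑ i, ((y i : ℤ) : ZMod M) ^ j := by
    intro j h1 h2
    have hmod : (∑ i, x i ^ j) ≡ (∑ i, y i ^ j) [ZMOD (M : ℤ)] := by
      rw [hMcast]; exact h j h1 h2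
    have := (ZMod.intCast_eq_intCast_iff (∑ i, x i ^ j) (∑ i, y i ^ j) M).mpr hmod
    push_cast at this
    exact this
  have hE := esymm_eq_of_psum_eq (R := ZMod M)
    (fun i => ((x i : ℤ) : ZMod M)) (fun i => ((y i : ℤ) : ZMod M)) hinv hpsum
  have hPQ := prod_X_sub_C_eq _ _ hE
  -- coefficient divisibility over ℤ
  have hcoeff : ∀ k : ℕ, (p : ℤ) ^ (n * a) ∣
      ((∏ i, (Polynomial.X - Polynomial.C (x i)))
        - ∏ i, (Polynomial.X - Polynomial.C (y i))).coeff k := by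
    intro k
    have hmap : ∀ z : Fin n → ℤ,
        (∏ i, (Polynomial.X - Polynomial.C (z i))).map (Int.castRingHom (ZMod M))
        = ∏ i, (Polynomial.X - Polynomial.C ((z i : ℤ) : ZMod M)) := by
      intro z
      rw [Polynomial.map_prod]
      exact Finset.prod_congr rfl fun i _ => by
        rw [Polynomial.map_sub, Polynomial.map_X, Polynomial.map_C]; rfl
    have h0 : ((((∏ i, (Polynomial.X - Polynomial.C (x i)))
        - ∏ i, (Polynomial.X - Polynomial.C (y i))).coeff k : ℤ) : ZMod M) = 0 := by
      have hmz : ((∏ i, (Polynomial.X - Polynomial.C (x i))) -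
          ∏ i, (Polynomial.X - Polynomial.C (y i))).map (Int.castRingHom (ZMod M)) = 0 := by
        rw [Polynomial.map_sub, hmap x, hmap y, hPQ, sub_self]
      have := congrArg (fun φ => Polynomial.coeff φ k) hmz
      simpa [Polynomial.coeff_map] using this
    have := (ZMod.intCast_zmod_eq_zero_iff_dvd _ M).mp h0
    rwa [hMcast] at this
  have hcong : ∀ c : ℕ, c ≤ a → Polynomial.C ((p : ℤ) ^ (n * c)) ∣
      (∏ i, (Polynomial.X - Polynomial.C (x i)))
        - ∏ i, (Polynomial.X - Polynomial.C (y i)) := by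
    intro c hc
    rw [Polynomial.C_dvd_iff_dvd_coeff]
    intro k
    exact dvd_trans (pow_dvd_pow _ (Nat.mul_le_mul le_rfl hc)) (hcoeff k)
  -- counts per residue
  have hcount : ∀ z : ZMod (p ^ a),
      Fintype.card {i // ((x i : ℤ) : ZMod (p ^ a)) = z}
        = Fintype.card {i // ((y i : ℤ) : ZMod (p ^ a)) = z} := by
    intro z
    set r : ℤ := (z.val : ℤ) with hr
    have hGa := gcd_prod_eq p hp a x y r (hcong a le_rfl)
    have hGa1 := gcd_prod_eq p hp (a - 1) x y r (hcong (a - 1) (by omega))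
    rw [prod_gcd_step p hp ha r x, prod_gcd_step p hp ha r y, hGa1] at hGa
    have hne : (∏ i, Int.gcd ((p : ℤ) ^ (a - 1)) (r - y i)) ≠ 0 := by
      apply Finset.prod_ne_zero_iff.mpr
      intro i _
      have hpos : 0 < Int.gcd ((p : ℤ) ^ (a - 1)) (r - y i) := by
        rw [Int.gcd_pos_iff]
        left
        exact pow_ne_zero _ (by exact_mod_cast hp.pos.ne')
      omega
    have hpow := Nat.eq_of_mul_eq_mul_left (Nat.pos_of_ne_zero hne) hGa
    have hcard := Nat.pow_right_injective hp.two_le hpow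
    have htrans : ∀ z' : Fin n → ℤ,
        ({i | (p : ℤ) ^ a ∣ (r - z' i)} : Finset (Fin n)).card
          = Fintype.card {i // ((z' i : ℤ) : ZMod (p ^ a)) = z} := by
      intro z'
      rw [Fintype.card_subtype]
      congr 1
      apply Finset.filter_congr
      intro i _
      have hrz : ((r : ℤ) : ZMod (p ^ a)) = z := by
        rw [hr]
        simp [ZMod.natCast_val, ZMod.cast_id]
      constructor
      · intro hdvd
        rw [← hrz, ZMod.intCast_eq_intCast_iff, Int.modEq_iff_dvd, hpacast]
        exact hdvd
      · intro heq
        have h3 := (ZMod.intCast_eq_intCast_iff (z' i) r (p ^ a)).mp (heq.trans hrz.symm)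
        rw [Int.modEq_iff_dvd, hpacast] at h3
        exact h3
    rw [← htrans x, ← htrans y, hcard]
  obtain ⟨σ, hσ⟩ := exists_perm_of_fiber_card_eq
    (fun i => ((x i : ℤ) : ZMod (p ^ a))) (fun i => ((y i : ℤ) : ZMod (p ^ a))) hcount
  refine ⟨σ, fun i => ?_⟩
  have := (ZMod.intCast_eq_intCast_iff (x i) (y (σ i)) (p ^ a)).mp (hσ i)
  rwa [hpacast] at this
end

section
/- Let (K, |·|_K) be a valued field with nontrivial absolute value, ξ = (ξ_1,…,ξ_n) ∈ 𝔬_K^n, and 0 < ε ≤ 1. Define r_j(ξ;ε) := min over root clusters 𝒞 ∋ ξ_j of (ε / ∏_{ξ_i ∉ 𝒞} |ξ_j − ξ_i|_K)^{1/|𝒞|}, and let 𝒞_j := B_K(ξ_j; r_j(ξ;ε)) ∩ {ξ_1,…,ξ_n}. Then the minimum is realized by 𝒞_j, i.e. r_j(ξ;ε) = (ε / ∏_{ξ_i ∉ 𝒞_j} |ξ_j − ξ_i|_K)^{1/|𝒞_j|}. -/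
open scoped Classical

/-- The Phong–Stein–Sturm radius `r_j(ξ; ε)`: the minimum, over root clusters
`𝒞 ⊆ {ξ_1, …, ξ_n}` containing `ξ_j`, of `(ε / ∏_{ξ_i ∉ 𝒞} |ξ_j - ξ_i|)^{1/|𝒞|}`.
Clusters are encoded as sets of indices closed under equality of root values. -/
noncomputable def pssRadius {K : Type*} [Field K] (v : AbsoluteValue K ℝ) {n : ℕ}
    (ξ : Fin n → K) (ε : ℝ) (j : Fin n) : ℝ :=
  sInf {r : ℝ | ∃ C : Finset (Fin n), j ∈ C ∧
    (∀ i i' : Fin n, ξ i = ξ i' → i ∈ C → i' ∈ C) ∧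
    r = (ε / ∏ i ∈ Cᶜ, v (ξ j - ξ i)) ^ ((C.card : ℝ)⁻¹)}

theorem stmt_5 (K : Type*) [Field K] (v : AbsoluteValue K ℝ)
    (hnt : ∃ a : K, v a ≠ 0 ∧ v a ≠ 1)
    (n : ℕ) (ξ : Fin n → K) (hξ : ∀ i, v (ξ i) ≤ 1)
    (ε : ℝ) (hε0 : 0 < ε) (hε1 : ε ≤ 1) (j : Fin n) :
    pssRadius v ξ ε j =
      (ε / ∏ i ∈ (Finset.univ.filter
          (fun i => v (ξ i - ξ j) ≤ pssRadius v ξ ε j))ᶜ, v (ξ j - ξ i)) ^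
        (((Finset.univ.filter
          (fun i => v (ξ i - ξ j) ≤ pssRadius v ξ ε j)).card : ℝ)⁻¹) := by
  classical
  set S : Set ℝ := {r : ℝ | ∃ C : Finset (Fin n), j ∈ C ∧
    (∀ i i' : Fin n, ξ i = ξ i' → i ∈ C → i' ∈ C) ∧
    r = (ε / ∏ i ∈ Cᶜ, v (ξ j - ξ i)) ^ ((C.card : ℝ)⁻¹)} with hSdef
  have hrS : pssRadius v ξ ε j = sInf S := rfl
  set r := pssRadius v ξ ε j with hrdef
  -- positivity of products for valid clusters
  have Ppos : ∀ C : Finset (Fin n), j ∈ C →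
      (∀ i i' : Fin n, ξ i = ξ i' → i ∈ C → i' ∈ C) →
      0 < ∏ i ∈ Cᶜ, v (ξ j - ξ i) := by
    intro C hjC hcl
    apply Finset.prod_pos
    intro i hi
    rcases eq_or_ne (ξ j) (ξ i) with h | h
    · exact absurd (hcl j i h hjC) (Finset.mem_compl.mp hi)
    · exact v.pos (sub_ne_zero.mpr h)
  -- S is finite and nonempty
  have hfin : S.Finite := by
    apply Set.Finite.subset (Set.finite_range
      (fun C : Finset (Fin n) => (ε / ∏ i ∈ Cᶜ, v (ξ j - ξ i)) ^ ((C.card : ℝ)⁻¹)))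
    rintro x ⟨C, -, -, rfl⟩
    exact ⟨C, rfl⟩
  have hne : S.Nonempty := ⟨_, Finset.univ, Finset.mem_univ j, fun i i' _ _ => Finset.mem_univ i', rfl⟩
  have hmem : r ∈ S := by
    show sInf S ∈ S
    exact hne.csInf_mem hfin
  have hlb : ∀ s ∈ S, r ≤ s := by
    intro s hs
    show sInf S ≤ s
    exact csInf_le hfin.bddBelow hs
  obtain ⟨C, hjC, hcl, hrC⟩ := hmem
  have hPC := Ppos C hjC hcl
  have hcC : C.card ≠ 0 := Finset.card_ne_zero_of_mem hjC
  have hdivpos : 0 < ε / ∏ i ∈ Cᶜ, v (ξ j - ξ i) := div_pos hε0 hPC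
  have hr0 : 0 < r := by rw [hrC]; exact Real.rpow_pos_of_pos hdivpos _
  have hrpow : r ^ C.card = ε / ∏ i ∈ Cᶜ, v (ξ j - ξ i) := by
    rw [hrC]; exact Real.rpow_inv_natCast_pow hdivpos.le hcC
  -- Step 1: every element of C is within distance r
  have hsub : ∀ i ∈ C, v (ξ j - ξ i) ≤ r := by
    by_contra hcon
    push_neg at hcon
    obtain ⟨i₀, hi₀C, hi₀⟩ := hcon
    set D : Finset (Fin n) := C.filter (fun i => r < v (ξ j - ξ i)) with hDdef
    set C' : Finset (Fin n) := C.filter (fun i => v (ξ j - ξ i) ≤ r) with hC'def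
    have hDne : D.Nonempty := ⟨i₀, Finset.mem_filter.mpr ⟨hi₀C, hi₀⟩⟩
    have hjC' : j ∈ C' := by
      refine Finset.mem_filter.mpr ⟨hjC, ?_⟩
      simp [hr0.le]
    have hclC' : ∀ i i' : Fin n, ξ i = ξ i' → i ∈ C' → i' ∈ C' := by
      intro i i' h hi
      rw [hC'def, Finset.mem_filter] at hi ⊢
      exact ⟨hcl i i' h hi.1, h ▸ hi.2⟩
    have hcC' : C'.card ≠ 0 := Finset.card_ne_zero_of_mem hjC'
    have hcards : C'.card + D.card = C.card := by
      have h := Finset.card_filter_add_card_filter_not (s := C)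
        (p := fun i => v (ξ j - ξ i) ≤ r)
      simpa [hC'def, hDdef, not_le] using h
    have hcompl : C'ᶜ = Cᶜ ∪ D := by
      ext i
      simp only [Finset.mem_compl, hC'def, hDdef, Finset.mem_filter, Finset.mem_union, not_and, not_le]
      by_cases h : i ∈ C <;> simp [h]
    have hdisj : Disjoint Cᶜ D := by
      rw [Finset.disjoint_left]
      intro a ha haD
      exact (Finset.mem_compl.mp ha) (Finset.mem_filter.mp haD).1
    have hPC' : ∏ i ∈ C'ᶜ, v (ξ j - ξ i)
        = (∏ i ∈ Cᶜ, v (ξ j - ξ i)) * ∏ i ∈ D, v (ξ j - ξ i) := by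
      rw [hcompl, Finset.prod_union hdisj]
    have hDprod : r ^ D.card < ∏ i ∈ D, v (ξ j - ξ i) := by
      calc r ^ D.card = ∏ _i ∈ D, r := (Finset.prod_const r).symm
        _ < ∏ i ∈ D, v (ξ j - ξ i) := by
          apply Finset.prod_lt_prod_of_nonempty (fun i _ => hr0) _ hDne
          intro i hi
          exact (Finset.mem_filter.mp hi).2
    have hDpos : 0 < ∏ i ∈ D, v (ξ j - ξ i) := lt_trans (pow_pos hr0 _) hDprod
    have hkey : ε / ∏ i ∈ C'ᶜ, v (ξ j - ξ i) < r ^ C'.card := by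
      rw [hPC', div_mul_eq_div_div, ← hrpow, ← hcards, pow_add, mul_div_assoc]
      exact mul_lt_of_lt_one_right (pow_pos hr0 _) ((div_lt_one hDpos).mpr hDprod)
    have hfC'S : (ε / ∏ i ∈ C'ᶜ, v (ξ j - ξ i)) ^ ((C'.card : ℝ)⁻¹) ∈ S :=
      ⟨C', hjC', hclC', rfl⟩
    have := hlb _ hfC'S
    have hlt : (ε / ∏ i ∈ C'ᶜ, v (ξ j - ξ i)) ^ ((C'.card : ℝ)⁻¹) < r := by
      calc (ε / ∏ i ∈ C'ᶜ, v (ξ j - ξ i)) ^ ((C'.card : ℝ)⁻¹)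
          < (r ^ C'.card) ^ ((C'.card : ℝ)⁻¹) := by
            apply Real.rpow_lt_rpow (le_of_lt (div_pos hε0 (Ppos C' hjC' hclC'))) hkey
            simpa using Nat.pos_of_ne_zero hcC'
        _ = r := Real.pow_rpow_inv_natCast hr0.le hcC'
    exact absurd this (not_le.mpr hlt)
  -- Step 2
  set Cs : Finset (Fin n) := Finset.univ.filter (fun i => v (ξ i - ξ j) ≤ r) with hCsdef
  have hCCs : C ⊆ Cs := by
    intro i hi
    refine Finset.mem_filter.mpr ⟨Finset.mem_univ i, ?_⟩
    rw [v.map_sub]; exact hsub i hi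
  have hjCs : j ∈ Cs := by
    refine Finset.mem_filter.mpr ⟨Finset.mem_univ j, ?_⟩
    simp [hr0.le]
  have hclCs : ∀ i i' : Fin n, ξ i = ξ i' → i ∈ Cs → i' ∈ Cs := by
    intro i i' h hi
    rw [hCsdef, Finset.mem_filter] at hi ⊢
    exact ⟨Finset.mem_univ i', h ▸ hi.2⟩
  have hPCs := Ppos Cs hjCs hclCs
  have hcCs : Cs.card ≠ 0 := Finset.card_ne_zero_of_mem hjCs
  set A : Finset (Fin n) := Cs \ C with hAdef
  have hcompl2 : Cᶜ = Csᶜ ∪ A := by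
    ext i
    simp only [Finset.mem_compl, Finset.mem_union, hAdef, Finset.mem_sdiff]
    by_cases h : i ∈ Cs
    · simp [h]
    · simp [h]; exact fun hc => h (hCCs hc)
  have hdisj2 : Disjoint Csᶜ A := by
    rw [Finset.disjoint_left]
    intro a ha haA
    exact (Finset.mem_compl.mp ha) (Finset.mem_sdiff.mp haA).1
  have hPsplit : ∏ i ∈ Cᶜ, v (ξ j - ξ i)
      = (∏ i ∈ Csᶜ, v (ξ j - ξ i)) * ∏ i ∈ A, v (ξ j - ξ i) := by
    rw [hcompl2, Finset.prod_union hdisj2]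
  have hAprod : ∏ i ∈ A, v (ξ j - ξ i) ≤ r ^ A.card := by
    calc ∏ i ∈ A, v (ξ j - ξ i) ≤ ∏ _i ∈ A, r := by
          apply Finset.prod_le_prod (fun i _ => v.nonneg _)
          intro i hi
          have := (Finset.mem_filter.mp (Finset.mem_sdiff.mp hi).1).2
          rwa [v.map_sub] at this
      _ = r ^ A.card := Finset.prod_const r
  have hcards2 : C.card + A.card = Cs.card := by
    have h := Finset.card_sdiff_add_card_eq_card hCCs
    rw [hAdef]
    omega
  have hApos : 0 < ∏ i ∈ A, v (ξ j - ξ i) := by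
    have h := hPsplit ▸ hPC
    rcases mul_pos_iff.mp h with ⟨_, h2⟩ | ⟨h1, _⟩
    · exact h2
    · linarith
  have hkey2 : ε / ∏ i ∈ Csᶜ, v (ξ j - ξ i) ≤ r ^ Cs.card := by
    have : ε / ∏ i ∈ Csᶜ, v (ξ j - ξ i)
        = (ε / ∏ i ∈ Cᶜ, v (ξ j - ξ i)) * ∏ i ∈ A, v (ξ j - ξ i) := by
      rw [hPsplit]
      field_simp
    rw [this, ← hrpow, ← hcards2, pow_add]
    exact mul_le_mul_of_nonneg_left hAprod (pow_nonneg hr0.le _)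
  have hle : (ε / ∏ i ∈ Csᶜ, v (ξ j - ξ i)) ^ ((Cs.card : ℝ)⁻¹) ≤ r := by
    calc (ε / ∏ i ∈ Csᶜ, v (ξ j - ξ i)) ^ ((Cs.card : ℝ)⁻¹)
        ≤ (r ^ Cs.card) ^ ((Cs.card : ℝ)⁻¹) :=
          Real.rpow_le_rpow (le_of_lt (div_pos hε0 hPCs)) hkey2 (inv_nonneg.mpr (Nat.cast_nonneg _))
      _ = r := Real.pow_rpow_inv_natCast hr0.le hcCs
  have hge : r ≤ (ε / ∏ i ∈ Csᶜ, v (ξ j - ξ i)) ^ ((Cs.card : ℝ)⁻¹) :=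
    hlb _ ⟨Cs, hjCs, hclCs, rfl⟩
  exact le_antisymm hge hle
end

section
/- Let (K, |·|_K) be a valued field with nontrivial absolute value, ξ ∈ 𝔬_K^n, 0 < ε ≤ 1, and λ ≥ 1. With r_j(ξ;ε) defined as the minimum over root clusters 𝒞 ∋ ξ_j of (ε / ∏_{ξ_i ∉ 𝒞} |ξ_j − ξ_i|_K)^{1/|𝒞|}, and 𝒞_{j,λ} := B_K(ξ_j; λ r_j(ξ;ε)) ∩ {ξ_1,…,ξ_n}, one has r_j(ξ;ε) ≤ (ε / ∏_{ξ_i ∉ 𝒞_{j,λ}} |ξ_j − ξ_i|_K)^{1/|𝒞_{j,λ}|} ≤ λ r_j(ξ;ε). -/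
open scoped Classical

theorem stmt_8 (K : Type*) [Field K] (v : AbsoluteValue K ℝ)
    (hnt : ∃ a : K, v a ≠ 0 ∧ v a ≠ 1)
    (n : ℕ) (ξ : Fin n → K) (hξ : ∀ i, v (ξ i) ≤ 1)
    (ε : ℝ) (hε0 : 0 < ε) (hε1 : ε ≤ 1) (lam : ℝ) (hlam : 1 ≤ lam) (j : Fin n) :
    pssRadius v ξ ε j ≤
      (ε / ∏ i ∈ (Finset.univ.filter
          (fun i => v (ξ i - ξ j) ≤ lam * pssRadius v ξ ε j))ᶜ, v (ξ j - ξ i)) ^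
        (((Finset.univ.filter
          (fun i => v (ξ i - ξ j) ≤ lam * pssRadius v ξ ε j)).card : ℝ)⁻¹) ∧
      (ε / ∏ i ∈ (Finset.univ.filter
          (fun i => v (ξ i - ξ j) ≤ lam * pssRadius v ξ ε j))ᶜ, v (ξ j - ξ i)) ^
        (((Finset.univ.filter
          (fun i => v (ξ i - ξ j) ≤ lam * pssRadius v ξ ε j)).card : ℝ)⁻¹) ≤
        lam * pssRadius v ξ ε j := by
  classical
  set d : Fin n → ℝ := fun i => v (ξ j - ξ i) with hd
  set P : Finset (Fin n) → Prop := fun C => j ∈ C ∧ ∀ i i' : Fin n, ξ i = ξ i' → i ∈ C → i' ∈ C with hP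
  set f : Finset (Fin n) → ℝ := fun C => (ε / ∏ i ∈ Cᶜ, v (ξ j - ξ i)) ^ ((C.card : ℝ)⁻¹) with hf
  set S : Set ℝ := {r : ℝ | ∃ C : Finset (Fin n), j ∈ C ∧
    (∀ i i' : Fin n, ξ i = ξ i' → i ∈ C → i' ∈ C) ∧
    r = (ε / ∏ i ∈ Cᶜ, v (ξ j - ξ i)) ^ ((C.card : ℝ)⁻¹)} with hS
  have hr_def : pssRadius v ξ ε j = sInf S := rfl
  have prodpos : ∀ C : Finset (Fin n), P C → 0 < ∏ i ∈ Cᶜ, v (ξ j - ξ i) := by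
    intro C hC
    apply Finset.prod_pos
    intro i hi
    have hne : ξ j - ξ i ≠ 0 := by
      intro h
      exact (Finset.mem_compl.mp hi) (hC.2 j i (sub_eq_zero.mp h) hC.1)
    exact v.pos hne
  have basepos : ∀ C, P C → 0 < ε / ∏ i ∈ Cᶜ, v (ξ j - ξ i) :=
    fun C hC => div_pos hε0 (prodpos C hC)
  have fpos : ∀ C, P C → 0 < f C := fun C hC =>
    Real.rpow_pos_of_pos (basepos C hC) _
  have memS : ∀ C, P C → f C ∈ S := fun C hC => ⟨C, hC.1, hC.2, rfl⟩
  have hSne : S.Nonempty :=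
    ⟨f Finset.univ, memS _ ⟨Finset.mem_univ j, fun i i' _ _ => Finset.mem_univ i'⟩⟩
  have hSfin : S.Finite := (Set.finite_range f).subset (by
    rintro x ⟨C, h1, h2, rfl⟩; exact ⟨C, rfl⟩)
  have hbdd : BddBelow S := hSfin.bddBelow
  have hmem : sInf S ∈ S := hSne.csInf_mem hSfin
  set r : ℝ := sInf S with hrS
  obtain ⟨Cs, hjCs, hcl, hCsval⟩ := hmem
  have hPCs : P Cs := ⟨hjCs, hcl⟩
  have hrfCs : r = f Cs := hCsval
  have hrpos : 0 < r := by rw [hrfCs]; exact fpos Cs hPCs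
  have hCscard : Cs.card ≠ 0 := Finset.card_ne_zero_of_mem hjCs
  -- base equation: ε / ∏_{Csᶜ} = r ^ Cs.card
  have hbase : ε / ∏ i ∈ Csᶜ, v (ξ j - ξ i) = r ^ Cs.card := by
    rw [hrfCs]
    rw [hf]
    rw [← Real.rpow_natCast ((ε / ∏ i ∈ Csᶜ, v (ξ j - ξ i)) ^ ((Cs.card : ℝ)⁻¹)) Cs.card,
      ← Real.rpow_mul (basepos Cs hPCs).le, inv_mul_cancel₀ (by exact_mod_cast hCscard),
      Real.rpow_one]
  -- rpow inverse lemma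
  have rpow_inv_card : ∀ (x : ℝ), 0 ≤ x → ∀ (m : ℕ), m ≠ 0 → (x ^ m) ^ ((m : ℝ)⁻¹) = x := by
    intro x hx m hm
    rw [← Real.rpow_natCast x m, ← Real.rpow_mul hx, mul_inv_cancel₀ (by exact_mod_cast hm),
      Real.rpow_one]
  -- key: all roots in Cs are within distance r of ξ j
  have hkey : ∀ i ∈ Cs, d i ≤ r := by
    by_contra hcon
    push_neg at hcon
    obtain ⟨i0, hi0Cs, hi0⟩ := hcon
    set C' : Finset (Fin n) := Cs.filter (fun i => d i ≤ r) with hC'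
    have hsub : C' ⊆ Cs := Finset.filter_subset _ _
    have hjC' : j ∈ C' := Finset.mem_filter.mpr ⟨hjCs, by
      show d j ≤ r
      simpa [hd] using hrpos.le⟩
    have hPC' : P C' := by
      refine ⟨hjC', fun i i' h hi => ?_⟩
      have hi' := Finset.mem_filter.mp hi
      refine Finset.mem_filter.mpr ⟨hcl i i' h hi'.1, ?_⟩
      have : d i' = d i := by simp [hd, h]
      rw [this]; exact hi'.2
    set T : Finset (Fin n) := Cs \ C' with hT
    have hTne : T.Nonempty := ⟨i0, Finset.mem_sdiff.mpr ⟨hi0Cs, by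
      intro h
      exact absurd (Finset.mem_filter.mp h).2 (not_le.mpr hi0)⟩⟩
    have hcompl : C'ᶜ \ Csᶜ = T := by
      ext x; simp only [Finset.mem_sdiff, Finset.mem_compl, hT]; tauto
    have hsplit : (∏ i ∈ T, v (ξ j - ξ i)) * ∏ i ∈ Csᶜ, v (ξ j - ξ i)
        = ∏ i ∈ C'ᶜ, v (ξ j - ξ i) := by
      rw [← hcompl]
      exact Finset.prod_sdiff (Finset.compl_subset_compl.mpr hsub)
    have hcard : T.card + C'.card = Cs.card := Finset.card_sdiff_add_card_eq_card hsub
    have hTgt : r ^ T.card < ∏ i ∈ T, v (ξ j - ξ i) := by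
      have := Finset.prod_lt_prod_of_nonempty (f := fun _ => r) (g := fun i => v (ξ j - ξ i))
        (fun i _ => hrpos) (fun i hiT => by
          have hi' := Finset.mem_sdiff.mp hiT
          have : ¬ d i ≤ r := fun h => hi'.2 (Finset.mem_filter.mpr ⟨hi'.1, h⟩)
          exact not_le.mp this) hTne
      simpa using this
    have hfC'lt : f C' < r := by
      have hb' : ε / ∏ i ∈ C'ᶜ, v (ξ j - ξ i) < r ^ C'.card := by
        rw [← hsplit]
        have h1 : ε / ((∏ i ∈ T, v (ξ j - ξ i)) * ∏ i ∈ Csᶜ, v (ξ j - ξ i))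
            = (ε / ∏ i ∈ Csᶜ, v (ξ j - ξ i)) / ∏ i ∈ T, v (ξ j - ξ i) := by
          rw [div_div, mul_comm]
        rw [h1, hbase]
        have h2 : r ^ Cs.card / ∏ i ∈ T, v (ξ j - ξ i) < r ^ Cs.card / r ^ T.card :=
          div_lt_div_of_pos_left (pow_pos hrpos _) (pow_pos hrpos _) hTgt
        have h3 : r ^ Cs.card / r ^ T.card = r ^ C'.card := by
          rw [← hcard, pow_add, mul_div_cancel_left₀ _ (pow_ne_zero _ hrpos.ne')]
        rw [h3] at h2; exact h2
      have hcpos : (0:ℝ) < ((C'.card : ℝ))⁻¹ := by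
        have := Nat.pos_of_ne_zero (Finset.card_ne_zero_of_mem hjC')
        exact inv_pos.mpr (by exact_mod_cast this)
      have := Real.rpow_lt_rpow (le_of_lt (basepos C' hPC')) hb' hcpos
      rw [rpow_inv_card r hrpos.le C'.card (Finset.card_ne_zero_of_mem hjC')] at this
      exact this
    exact absurd (csInf_le hbdd (memS C' hPC')) (not_le.mpr hfC'lt)
  -- the ball cluster
  set Cl : Finset (Fin n) := Finset.univ.filter (fun i => v (ξ i - ξ j) ≤ lam * pssRadius v ξ ε j) with hCl
  have hmemCl : ∀ i, i ∈ Cl ↔ d i ≤ lam * r := by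
    intro i
    rw [hCl, Finset.mem_filter]
    constructor
    · rintro ⟨-, h⟩; rwa [v.map_sub] at h
    · intro h; exact ⟨Finset.mem_univ i, by rwa [v.map_sub]⟩
  have hlamr : 0 < lam * r := mul_pos (lt_of_lt_of_le one_pos hlam) hrpos
  have hjCl : j ∈ Cl := (hmemCl j).mpr (by simpa [hd] using hlamr.le)
  have hPCl : P Cl := by
    refine ⟨hjCl, fun i i' h hi => ?_⟩
    rw [hmemCl] at hi ⊢
    have : d i' = d i := by simp [hd, h]
    rw [this]; exact hi
  have hCsCl : Cs ⊆ Cl := by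
    intro i hi
    rw [hmemCl]
    exact le_trans (hkey i hi) (le_mul_of_one_le_left hrpos.le hlam)
  have hfirst : r ≤ f Cl := csInf_le hbdd (memS Cl hPCl)
  have hsecond : f Cl ≤ lam * r := by
    have hcompl2 : Csᶜ \ Clᶜ = Cl \ Cs := by
      ext x; simp only [Finset.mem_sdiff, Finset.mem_compl]; tauto
    have hsplit2 : (∏ i ∈ Cl \ Cs, v (ξ j - ξ i)) * ∏ i ∈ Clᶜ, v (ξ j - ξ i)
        = ∏ i ∈ Csᶜ, v (ξ j - ξ i) := by
      rw [← hcompl2]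
      exact Finset.prod_sdiff (Finset.compl_subset_compl.mpr hCsCl)
    have hcard2 : (Cl \ Cs).card + Cs.card = Cl.card := Finset.card_sdiff_add_card_eq_card hCsCl
    have hprodle : ∏ i ∈ Cl \ Cs, v (ξ j - ξ i) ≤ (lam * r) ^ (Cl \ Cs).card := by
      calc ∏ i ∈ Cl \ Cs, v (ξ j - ξ i) ≤ ∏ _i ∈ Cl \ Cs, (lam * r) := by
            apply Finset.prod_le_prod (fun i _ => v.nonneg _)
            intro i hiT
            have := (hmemCl i).mp (Finset.mem_sdiff.mp hiT).1
            exact this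
        _ = (lam * r) ^ (Cl \ Cs).card := Finset.prod_const _
    have hbl : ε / ∏ i ∈ Clᶜ, v (ξ j - ξ i) ≤ (lam * r) ^ Cl.card := by
      have h1 : ε / ∏ i ∈ Clᶜ, v (ξ j - ξ i)
          = (ε / ∏ i ∈ Csᶜ, v (ξ j - ξ i)) * ∏ i ∈ Cl \ Cs, v (ξ j - ξ i) := by
        rw [← hsplit2]
        have hne : (∏ i ∈ Clᶜ, v (ξ j - ξ i)) ≠ 0 := (prodpos Cl hPCl).ne'
        have hneT : (∏ i ∈ Cl \ Cs, v (ξ j - ξ i)) ≠ 0 := by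
          apply ne_of_gt
          apply Finset.prod_pos
          intro i hi
          have hi' := Finset.mem_sdiff.mp hi
          apply v.pos
          intro h
          exact hi'.2 (hPCs.2 j i (sub_eq_zero.mp h) hPCs.1)
        field_simp
      rw [h1, hbase, ← hcard2, pow_add]
      have h2 : r ^ Cs.card ≤ (lam * r) ^ Cs.card :=
        pow_le_pow_left₀ hrpos.le (le_mul_of_one_le_left hrpos.le hlam) _
      calc r ^ Cs.card * ∏ i ∈ Cl \ Cs, v (ξ j - ξ i)
          ≤ (lam * r) ^ Cs.card * (lam * r) ^ (Cl \ Cs).card := by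
            apply mul_le_mul h2 hprodle (Finset.prod_nonneg fun i _ => v.nonneg _)
              (pow_nonneg hlamr.le _)
        _ = (lam * r) ^ (Cl \ Cs).card * (lam * r) ^ Cs.card := mul_comm _ _
    have := Real.rpow_le_rpow (le_of_lt (basepos Cl hPCl)) hbl
      (inv_nonneg.mpr (Nat.cast_nonneg _) : (0:ℝ) ≤ ((Cl.card : ℝ))⁻¹)
    rw [rpow_inv_card (lam * r) hlamr.le Cl.card (Finset.card_ne_zero_of_mem hjCl)] at this
    exact this
  exact ⟨hfirst, hsecond⟩
end
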